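/- Let X be a complex Banach space, let Ω be a nonempty bounded open connected subset of ℂ, and let T ∈ B₁(Ω). Then T is strongly irreducible: there is no operator P ∈ B(X) with P² = P, P ≠ 0, P ≠ I and PT = TP. Consequently, σ(T) is a connected subset of ℂ. -/

import Mathlib

/-!
Let `P` be an idempotent commuting with `T`. The parts of `T` on `ker P` and on `ker (1 - P)`
have open resolvent sets. Since each eigenspace `ker (T - μ)`, `μ ∈ Ω`, is a line and `T - μ` is
onto, these two resolvent sets cover `Ω` without meeting inside it. As `Ω` is connected, one of
them contains `Ω`; then all eigenvectors lie in `ker P` or all in `ker (1 - P)`, and density of the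
eigenvectors gives `P = 0` or `P = 1`.

If `σ(T)` splits into disjoint closed pieces, with `Ω` inside the piece `u`, take a bounded open
`D ⊇ σ(T) \ u` whose closure misses `u`. An eigenvector `x` for `ν ∈ Ω` solves
`(T - μ) g(μ) = x` holomorphically off `u`, by `g(μ) = (ν - μ)⁻¹ x`. The resolvent is bounded on
`frontier D`, so by the maximum modulus principle such solutions pass to uniform limits on `D`,
and by density every vector has one. This makes `T - μ` onto for `μ ∈ D`, and one-to-one by the
identity theorem, because off the spectrum the solution for a kernel vector is explicit. Hence
`σ(T) ⊆ u`.
-/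

/-- The Cowen–Douglas class `B₁(Ω)`: `Ω ⊆ σ(T)`; the closed linear span of
`⋃_{λ∈Ω} ker(T − λ)` is all of `X`; `T − λ` is surjective for every `λ ∈ Ω`; and
`dim ker(T − λ) = 1` for every `λ ∈ Ω`. -/
def MemCowenDouglasOne {X : Type*} [NormedAddCommGroup X] [NormedSpace ℂ X]
    (Ω : Set ℂ) (T : X →L[ℂ] X) : Prop :=
  Ω ⊆ spectrum ℂ T ∧
  (Submodule.span ℂ
      (⋃ μ ∈ Ω, ((LinearMap.ker ((T - μ • (1 : X →L[ℂ] X) : X →ₗ[ℂ] X)) : Submodule ℂ X) : Set X))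
    ).topologicalClosure = ⊤ ∧
  (∀ μ ∈ Ω, Function.Surjective (T - μ • (1 : X →L[ℂ] X))) ∧
  (∀ μ ∈ Ω, Module.finrank ℂ (LinearMap.ker ((T - μ • (1 : X →L[ℂ] X) : X →ₗ[ℂ] X))) = 1)

open Set Filter Bornology Topology

namespace ContinuousLinearMap

variable {𝕜 E : Type*} [NontriviallyNormedField 𝕜] [NormedAddCommGroup E] [NormedSpace 𝕜 E]

theorem mem_resolventSet_iff_bijective [CompleteSpace E] {T : E →L[𝕜] E} {μ : 𝕜} :
    μ ∈ resolventSet 𝕜 T ↔ Function.Bijective (T - μ • (1 : E →L[𝕜] E)) := by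
  rw [spectrum.mem_resolventSet_iff, Algebra.algebraMap_eq_smul_one, ← neg_sub, IsUnit.neg_iff,
    isUnit_iff_bijective]

variable {P T : E →L[𝕜] E} {μ : 𝕜}

theorem apply_apply_of_commute (h : Commute P T) (x : E) : P (T x) = T (P x) :=
  DFunLike.congr_fun h.eq x

theorem apply_mem_ker_of_commute (h : Commute P T) : ∀ x ∈ P.ker, T x ∈ P.ker := by
  intro x hx
  rw [LinearMap.mem_ker, coe_coe] at hx ⊢
  rw [apply_apply_of_commute h, hx, map_zero]

abbrev restrictKer (h : Commute P T) : P.ker →L[𝕜] P.ker :=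
  T.restrict (apply_mem_ker_of_commute h)

theorem coe_restrictKer_sub_smul_apply (h : Commute P T) (μ : 𝕜) (x : P.ker) :
    ((restrictKer h - μ • 1) x : E) = (T - μ • (1 : E →L[𝕜] E)) x := rfl

theorem sub_apply_self_mem_ker (hP : IsIdempotentElem P) (x : E) : x - P x ∈ P.ker := by
  rw [LinearMap.mem_ker, coe_coe, map_sub, sub_eq_zero]
  exact (DFunLike.congr_fun hP.eq x).symm

theorem mem_resolventSet_restrictKer [CompleteSpace E] (hP : IsIdempotentElem P)
    (h : Commute P T) (hsurj : Function.Surjective (T - μ • (1 : E →L[𝕜] E)))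
    (hdisj : Disjoint (T - μ • (1 : E →L[𝕜] E)).ker P.ker) :
    μ ∈ resolventSet 𝕜 (restrictKer h) := by
  have hPS : Commute P (T - μ • 1) := h.sub_right ((Commute.one_right P).smul_right μ)
  rw [mem_resolventSet_iff_bijective]
  refine ⟨(injective_iff_map_eq_zero _).2 fun x hx => ?_, fun y => ?_⟩
  · exact Subtype.ext (hdisj.le_bot ⟨congrArg Subtype.val hx, x.2⟩)
  · obtain ⟨x, hx⟩ := hsurj y
    refine ⟨⟨x - P x, sub_apply_self_mem_ker hP x⟩, Subtype.ext ?_⟩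
    have hy : P y = 0 := y.2
    rw [coe_restrictKer_sub_smul_apply, map_sub, ← apply_apply_of_commute hPS, hx, hy, sub_zero]

theorem ker_sub_smul_le_ker_one_sub [CompleteSpace E] (hP : IsIdempotentElem P)
    (h : Commute P T) (hμ : μ ∈ resolventSet 𝕜 (restrictKer h)) :
    (T - μ • (1 : E →L[𝕜] E)).ker ≤ (1 - P).ker := by
  have hPS : Commute P (T - μ • 1) := h.sub_right ((Commute.one_right P).smul_right μ)
  intro x hx
  rw [LinearMap.mem_ker, coe_coe] at hx ⊢
  have hzero : (restrictKer h - μ • 1) ⟨x - P x, sub_apply_self_mem_ker hP x⟩ = 0 := by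
    refine Subtype.ext ?_
    rw [coe_restrictKer_sub_smul_apply, map_sub, ← apply_apply_of_commute hPS, hx, map_zero,
      sub_zero, ZeroMemClass.coe_zero]
  have := congrArg Subtype.val
    ((mem_resolventSet_iff_bijective.1 hμ).1 (hzero.trans (map_zero _).symm))
  simpa using this

theorem eq_zero_of_subset_ker {F : Type*} [NormedAddCommGroup F] [NormedSpace 𝕜 F] {s : Set E}
    (hs : (Submodule.span 𝕜 s).topologicalClosure = ⊤) {A : E →L[𝕜] F} (h : s ⊆ A.ker) :
    A = 0 :=
  ext_on (Submodule.dense_iff_topologicalClosure_eq_top.2 hs) fun x hx => by simpa using h hx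

theorem eq_zero_or_eq_one_of_isIdempotentElem_of_commute [CompleteSpace E] {Ω : Set 𝕜}
    (hΩ : IsPreconnected Ω)
    (hdense : (Submodule.span 𝕜 (⋃ μ ∈ Ω, ((T - μ • (1 : E →L[𝕜] E)).ker : Set E))
      ).topologicalClosure = ⊤)
    (hsurj : ∀ μ ∈ Ω, Function.Surjective (T - μ • (1 : E →L[𝕜] E)))
    (hfin : ∀ μ ∈ Ω, Module.finrank 𝕜 (T - μ • (1 : E →L[𝕜] E)).ker = 1)
    (hP : IsIdempotentElem P) (h : Commute P T) : P = 0 ∨ P = 1 := by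
  have hQT : Commute (1 - P) T := (Commute.one_left T).sub_left h
  have hPQ : Disjoint P.ker (1 - P).ker := by
    rw [Submodule.disjoint_def]
    intro x hPx hQx
    simp only [LinearMap.mem_ker, coe_coe, sub_apply] at hPx hQx
    rwa [hPx, sub_zero] at hQx
  have hcover : Ω ⊆ resolventSet 𝕜 (restrictKer h) ∪ resolventSet 𝕜 (restrictKer hQT) := by
    intro μ hμ
    by_cases hd : Disjoint (T - μ • (1 : E →L[𝕜] E)).ker P.ker
    · exact Or.inl (mem_resolventSet_restrictKer hP h (hsurj μ hμ) hd)
    · have hle := (Submodule.isAtom_iff_finrank_eq_one.2 (hfin μ hμ)).not_disjoint_iff_le.1 hd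
      exact Or.inr (mem_resolventSet_restrictKer hP.one_sub hQT (hsurj μ hμ) (hPQ.mono_left hle))
  have hexcl : Ω ∩ (resolventSet 𝕜 (restrictKer h) ∩ resolventSet 𝕜 (restrictKer hQT)) = ∅ := by
    refine eq_empty_of_forall_notMem fun μ ⟨hμ, hu, hv⟩ => ?_
    have hle := le_inf (ker_sub_smul_le_ker_one_sub hP h hu)
      (ker_sub_smul_le_ker_one_sub hP.one_sub hQT hv)
    rw [sub_sub_cancel, inf_comm, hPQ.eq_bot] at hle
    exact (Submodule.isAtom_iff_finrank_eq_one.2 (hfin μ hμ)).ne_bot (le_bot_iff.1 hle)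
  rcases isPreconnected_iff_subset_of_disjoint.1 hΩ _ _ (spectrum.isOpen_resolventSet _)
    (spectrum.isOpen_resolventSet _) hcover hexcl with hu | hv
  · refine Or.inr (sub_eq_zero.1 (eq_zero_of_subset_ker hdense ?_)).symm
    exact iUnion₂_subset fun μ hμ => ker_sub_smul_le_ker_one_sub hP h (hu hμ)
  · refine Or.inl ((sub_sub_cancel 1 P).symm.trans (eq_zero_of_subset_ker hdense ?_))
    exact iUnion₂_subset fun μ hμ => ker_sub_smul_le_ker_one_sub hP.one_sub hQT (hv hμ)

theorem sub_smul_one_apply_of_apply_eq_zero {ν : 𝕜} {x : E}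
    (hx : (T - ν • (1 : E →L[𝕜] E)) x = 0) (μ : 𝕜) : (T - μ • (1 : E →L[𝕜] E)) x = (ν - μ) • x := by
  simp only [sub_apply, smul_apply, one_apply_eq_self] at hx ⊢
  rw [sub_eq_zero.1 hx, sub_smul]

theorem norm_le_norm_resolvent_mul {μ : 𝕜} (hμ : μ ∈ resolventSet 𝕜 T) {w x : E}
    (hwx : (T - μ • (1 : E →L[𝕜] E)) w = x) : ‖w‖ ≤ ‖resolvent T μ‖ * ‖x‖ := by
  have hw : w = resolvent T μ (-x) := by
    rw [← hwx, ← neg_apply, neg_sub, ← Algebra.algebraMap_eq_smul_one]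
    have hunit := spectrum.mem_resolventSet_iff.1 hμ
    exact (DFunLike.congr_fun (Ring.inverse_mul_cancel _ hunit) w).symm
  rw [hw, ← norm_neg x]
  exact le_opNorm _ _

end ContinuousLinearMap

theorem not_connectedComponentIn_subset_of_isCompact {α : Type*} [TopologicalSpace α] [T2Space α]
    [LocallyConnectedSpace α] [ConnectedSpace α] [NoncompactSpace α] {D K : Set α} (hD : IsOpen D)
    (hK : IsCompact K) (hKD : K ⊆ D) {x : α} (hx : x ∈ D) : ¬ connectedComponentIn D x ⊆ K := by
  intro hsub
  have hclosed : IsClosed (connectedComponentIn D x) :=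
    closure_subset_iff_isClosed.1 <|
      isPreconnected_connectedComponentIn.closure.subset_connectedComponentIn
        (subset_closure (mem_connectedComponentIn hx))
        ((closure_minimal hsub hK.isClosed).trans hKD)
  have huniv :=
    IsClopen.eq_univ ⟨hclosed, hD.connectedComponentIn⟩ ⟨x, mem_connectedComponentIn hx⟩
  exact noncompact_univ α (hK.of_isClosed_subset isClosed_univ (huniv ▸ hsub))

namespace ContinuousLinearMap

variable {X : Type*} [NormedAddCommGroup X] [NormedSpace ℂ X]

-- In local spectral theory this is the glocal spectral subspace `𝒳_T(ℂ \ U)`.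
def localResolventSubmodule (T : X →L[ℂ] X) (U : Set ℂ) : Submodule ℂ X where
  carrier := {x | ∃ g : ℂ → X, DifferentiableOn ℂ g U ∧
    ∀ μ ∈ U, (T - μ • (1 : X →L[ℂ] X)) (g μ) = x}
  add_mem' := by
    rintro x y ⟨g, hg, hgx⟩ ⟨h, hh, hhy⟩
    exact ⟨g + h, hg.add hh, fun μ hμ => by simp only [Pi.add_apply, map_add, hgx μ hμ, hhy μ hμ]⟩
  zero_mem' := ⟨0, differentiableOn_const 0, fun μ _ => map_zero _⟩
  smul_mem' := by
    rintro c x ⟨g, hg, hgx⟩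
    exact ⟨c • g, hg.const_smul c, fun μ hμ => by simp only [Pi.smul_apply, map_smul, hgx μ hμ]⟩

variable {T : X →L[ℂ] X}

theorem ker_sub_smul_le_localResolventSubmodule {U : Set ℂ} {ν : ℂ} (hν : ν ∉ U) :
    (T - ν • (1 : X →L[ℂ] X)).ker ≤ localResolventSubmodule T U := by
  intro x hx
  rw [LinearMap.mem_ker, coe_coe] at hx
  have hne : ∀ μ ∈ U, ν - μ ≠ 0 := fun μ hμ => sub_ne_zero.2 fun h => hν (h ▸ hμ)
  refine ⟨fun μ => (ν - μ)⁻¹ • x,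
    (((differentiableOn_const ν).sub differentiableOn_id).inv hne).smul_const x, fun μ hμ => ?_⟩
  rw [map_smul, sub_smul_one_apply_of_apply_eq_zero hx, smul_smul, inv_mul_cancel₀ (hne μ hμ),
    one_smul]

variable [CompleteSpace X]

theorem exists_norm_le_of_frontier_subset_resolventSet {D : Set ℂ} (hD : IsBounded D)
    (hfr : frontier D ⊆ resolventSet ℂ T) :
    ∃ M > 0, ∀ (x : X) (g : ℂ → X), DiffContOnCl ℂ g D →
      (∀ μ ∈ frontier D, (T - μ • (1 : X →L[ℂ] X)) (g μ) = x) →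
      ∀ μ ∈ closure D, ‖g μ‖ ≤ M * ‖x‖ := by
  have hcpt : IsCompact (frontier D) :=
    hD.isCompact_closure.of_isClosed_subset isClosed_frontier frontier_subset_closure
  have hcont : ContinuousOn (resolvent T) (frontier D) := fun z hz =>
    (spectrum.hasDerivAt_resolvent_const_left (hfr hz)).continuousAt.continuousWithinAt
  obtain ⟨C, hC⟩ := hcpt.exists_bound_of_continuousOn hcont
  refine ⟨max C 1, by positivity, fun x g hg hgx μ hμ =>
    Complex.norm_le_of_forall_mem_frontier_norm_le hD hg (fun z hz => ?_) hμ⟩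
  calc ‖g z‖ ≤ ‖resolvent T z‖ * ‖x‖ := norm_le_norm_resolvent_mul (hfr hz) (hgx z hz)
    _ ≤ max C 1 * ‖x‖ := by gcongr; exact le_max_of_le_left (hC z hz)

theorem closure_localResolventSubmodule_subset {D U : Set ℂ} (hDo : IsOpen D) (hDb : IsBounded D)
    (hDU : closure D ⊆ U) (hfr : frontier D ⊆ resolventSet ℂ T) :
    closure (localResolventSubmodule T U : Set X) ⊆ localResolventSubmodule T D := by
  obtain ⟨M, hM0, hM⟩ := exists_norm_le_of_frontier_subset_resolventSet hDb hfr
  intro y hy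
  obtain ⟨x, hxU, hxy⟩ := mem_closure_iff_seq_limit.1 hy
  choose g hg hgx using hxU
  have hcauchy : UniformCauchySeqOn g atTop D := by
    rw [Metric.uniformCauchySeqOn_iff]
    intro ε hε
    obtain ⟨N, hN⟩ := Metric.cauchySeq_iff.1 hxy.cauchySeq (ε / M) (div_pos hε hM0)
    refine ⟨N, fun m hm n hn μ hμ => ?_⟩
    have hdiff : ∀ z ∈ U, (T - z • (1 : X →L[ℂ] X)) ((g m - g n) z) = x m - x n := fun z hz => by
      rw [Pi.sub_apply, map_sub, hgx m z hz, hgx n z hz]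
    calc dist (g m μ) (g n μ) = ‖(g m - g n) μ‖ := dist_eq_norm _ _
      _ ≤ M * ‖x m - x n‖ := hM _ _ (((hg m).sub (hg n)).mono hDU).diffContOnCl
          (fun z hz => hdiff z (hDU (frontier_subset_closure hz))) μ (subset_closure hμ)
      _ < M * (ε / M) := by gcongr; rw [← dist_eq_norm]; exact hN m hm n hn
      _ = ε := mul_div_cancel₀ ε hM0.ne'
  choose! G hG using fun μ (hμ : μ ∈ D) => cauchySeq_tendsto_of_complete (hcauchy.cauchySeq hμ)
  refine ⟨G, (hcauchy.tendstoUniformlyOn_of_tendsto hG).tendstoLocallyUniformlyOn.differentiableOn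
    (Eventually.of_forall fun n => (hg n).mono (subset_closure.trans hDU)) hDo, fun μ hμ => ?_⟩
  refine tendsto_nhds_unique (((T - μ • (1 : X →L[ℂ] X)).continuous.tendsto _).comp (hG μ hμ)) ?_
  simpa only [Function.comp_def, hgx _ μ (hDU (subset_closure hμ))] using hxy

theorem mem_resolventSet_of_localResolventSubmodule_eq_top {D : Set ℂ} {μ₀ : ℂ}
    (hW : localResolventSubmodule T D = ⊤) (hD : IsOpen D) (hμ₀ : μ₀ ∈ D)
    (hcomp : ¬ connectedComponentIn D μ₀ ⊆ spectrum ℂ T) : μ₀ ∈ resolventSet ℂ T := by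
  have hsol (y : X) : y ∈ localResolventSubmodule T D := by rw [hW]; exact Submodule.mem_top
  rw [mem_resolventSet_iff_bijective]
  refine ⟨(injective_iff_map_eq_zero _).2 fun v hv => ?_, fun y => ?_⟩
  · obtain ⟨G, hGd, hG⟩ := hsol v
    obtain ⟨μ₁, hμ₁, hμ₁σ⟩ := not_subset.1 hcomp
    have hD₀D : connectedComponentIn D μ₀ ⊆ D := connectedComponentIn_subset D μ₀
    -- Off the spectrum `T - μ` is injective and maps both sides to `(μ₀ - μ) • v`.
    have hres : ∀ μ ∈ D ∩ resolventSet ℂ T, (μ₀ - μ) • G μ = v := fun μ ⟨hμD, hμρ⟩ =>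
      (mem_resolventSet_iff_bijective.1 hμρ).1 <| by
        rw [map_smul, hG μ hμD, sub_smul_one_apply_of_apply_eq_zero hv]
    have hident : EqOn (fun μ => (μ₀ - μ) • G μ) (fun _ => v) (connectedComponentIn D μ₀) := by
      refine AnalyticOnNhd.eqOn_of_preconnected_of_eventuallyEq (𝕜 := ℂ) ?_ analyticOnNhd_const
        isPreconnected_connectedComponentIn hμ₁ ?_
      · exact ((((differentiableOn_const μ₀).sub differentiableOn_id).smul hGd).analyticOnNhd
          hD).mono hD₀D
      · refine eventuallyEq_of_mem ((hD.connectedComponentIn.inter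
          (spectrum.isOpen_resolventSet T)).mem_nhds ⟨hμ₁, notMem_compl_iff.1 hμ₁σ⟩) ?_
        exact fun μ hμ => hres μ ⟨hD₀D hμ.1, hμ.2⟩
    simpa using (hident (mem_connectedComponentIn hμ₀)).symm
  · obtain ⟨G, -, hG⟩ := hsol y
    exact ⟨G μ₀, hG μ₀ hμ₀⟩

theorem spectrum_subset_left_of_subset_union {Ω u v : Set ℂ}
    (hdense : (Submodule.span ℂ (⋃ μ ∈ Ω, ((T - μ • (1 : X →L[ℂ] X)).ker : Set X))
      ).topologicalClosure = ⊤)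
    (hu : IsClosed u) (hv : IsClosed v) (huv : Disjoint u v) (hσ : spectrum ℂ T ⊆ u ∪ v)
    (hΩ : Ω ⊆ u) : spectrum ℂ T ⊆ u := by
  set K := spectrum ℂ T ∩ v
  have hK : IsCompact K := (spectrum.isCompact T).inter_right hv
  have hKu : K ⊆ uᶜ := fun μ hμ => huv.notMem_of_mem_right hμ.2
  obtain ⟨D, hDo, hKD, hDu, hDcpt⟩ := exists_open_between_and_isCompact_closure
    hK hu.isOpen_compl hKu
  have hσD : D ∩ spectrum ℂ T ⊆ K := fun μ ⟨hμD, hμσ⟩ =>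
    ⟨hμσ, (hσ hμσ).resolve_left (hDu (subset_closure hμD))⟩
  have hfr : frontier D ⊆ resolventSet ℂ T := by
    intro μ hμ
    rw [hDo.frontier_eq] at hμ
    exact notMem_compl_iff.1 fun hμσ => hμ.2 (hKD ⟨hμσ, (hσ hμσ).resolve_left (hDu hμ.1)⟩)
  have hW : localResolventSubmodule T D = ⊤ := by
    have hspan : Submodule.span ℂ (⋃ μ ∈ Ω, ((T - μ • (1 : X →L[ℂ] X)).ker : Set X)) ≤
        localResolventSubmodule T uᶜ := Submodule.span_le.2 <| iUnion₂_subset fun ν hν =>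
      ker_sub_smul_le_localResolventSubmodule (notMem_compl_iff.2 (hΩ hν))
    rw [eq_top_iff, ← hdense]
    intro y hy
    rw [← SetLike.mem_coe, Submodule.topologicalClosure_coe] at hy
    exact closure_localResolventSubmodule_subset hDo (hDcpt.isBounded.subset subset_closure) hDu
      hfr (closure_mono hspan hy)
  intro μ hμ
  by_contra hμu
  have hμD : μ ∈ D := hKD ⟨hμ, (hσ hμ).resolve_left hμu⟩
  refine hμ (mem_resolventSet_of_localResolventSubmodule_eq_top hW hDo hμD fun hsub => ?_)
  exact not_connectedComponentIn_subset_of_isCompact hDo hK hKD hμD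
    fun z hz => hσD ⟨connectedComponentIn_subset D μ hz, hsub hz⟩

end ContinuousLinearMap

theorem stronglyIrreducible_and_connected_spectrum_of_cowenDouglas_general
    (X : Type*) [NormedAddCommGroup X] [NormedSpace ℂ X] [CompleteSpace X]
    (Ω : Set ℂ) (hne : Ω.Nonempty)
    (hconn : IsConnected Ω)
    (T : X →L[ℂ] X) (hT : MemCowenDouglasOne Ω T) :
    (¬ ∃ P : X →L[ℂ] X, P * P = P ∧ P ≠ 0 ∧ P ≠ 1 ∧ P * T = T * P) ∧
    IsConnected (spectrum ℂ T) := by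
  obtain ⟨hΩσ, hdense, hsurj, hfin⟩ := hT
  refine ⟨fun ⟨P, hP, hP0, hP1, hPT⟩ => ?_, hne.mono hΩσ, ?_⟩
  · rcases ContinuousLinearMap.eq_zero_or_eq_one_of_isIdempotentElem_of_commute
      hconn.isPreconnected hdense hsurj hfin hP hPT with h | h
    exacts [hP0 h, hP1 h]
  · refine (isPreconnected_iff_subset_of_fully_disjoint_closed (spectrum.isClosed T)).2
      fun u v hu hv hσ huv => ?_
    rcases isPreconnected_iff_subset_of_disjoint_closed.1 hconn.isPreconnected u v hu hv
      (hΩσ.trans hσ) (by rw [huv.inter_eq, inter_empty]) with hΩ | hΩ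
    · exact Or.inl (ContinuousLinearMap.spectrum_subset_left_of_subset_union hdense hu hv huv
        hσ hΩ)
    · exact Or.inr (ContinuousLinearMap.spectrum_subset_left_of_subset_union hdense hv hu
        huv.symm (union_comm u v ▸ hσ) hΩ)

/-- If `Ω` is a nonempty bounded open connected subset of `ℂ` and
`T ∈ B₁(Ω)`, then `T` is strongly irreducible: no nontrivial idempotent commutes with
`T`. Consequently, `σ(T)` is a connected subset of `ℂ`. -/
theorem stronglyIrreducible_and_connected_spectrum_of_cowenDouglas
    (X : Type*) [NormedAddCommGroup X] [NormedSpace ℂ X] [CompleteSpace X]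
    (Ω : Set ℂ) (hne : Ω.Nonempty) (hbd : Bornology.IsBounded Ω) (hop : IsOpen Ω)
    (hconn : IsConnected Ω)
    (T : X →L[ℂ] X) (hT : MemCowenDouglasOne Ω T) :
    (¬ ∃ P : X →L[ℂ] X, P * P = P ∧ P ≠ 0 ∧ P ≠ 1 ∧ P * T = T * P) ∧
    IsConnected (spectrum ℂ T) :=
  stronglyIrreducible_and_connected_spectrum_of_cowenDouglas_general X Ω hne hconn T hT
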